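/- Let G be a simple stochastic game with value function V, and let G' be the game obtained from G by removing, at every Minimizer state s, each action a ∈ Av(s) with V(s,a) > V(s) (at least one available action remains at each Minimizer state, and all other states are unchanged). Then the value function of G' equals V; that is, removing Minimizer's suboptimal actions does not change the value of any state. -/

import Mathlib

/-- A simple stochastic game (SG): a finite set of states `S` partitioned into
Maximizer states (`isMax s = true`) and Minimizer states (`isMax s = false`),
a target state, a sink state, a finite set of actions `A`, a nonempty set of
available actions at each state, and a transition function assigning to each
state and available action a probability distribution over states; the target
and the sink each have exactly one available action, a self-loop with
probability 1. -/
structure SG (S A : Type) [Fintype S] [DecidableEq S] [Fintype A] [DecidableEq A] where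
  isMax : S → Bool
  target : S
  sink : S
  target_ne_sink : target ≠ sink
  Av : S → Finset A
  Av_nonempty : ∀ s, (Av s).Nonempty
  δ : S → A → S → ℝ
  δ_nonneg : ∀ s a s', 0 ≤ δ s a s'
  δ_sum : ∀ s, ∀ a ∈ Av s, ∑ s', δ s a s' = 1
  target_loop : ∃ a, Av target = {a} ∧ δ target a target = 1
  sink_loop : ∃ a, Av sink = {a} ∧ δ sink a sink = 1

namespace SG

variable {S A : Type} [Fintype S] [DecidableEq S] [Fintype A] [DecidableEq A]

/-- `f(s,a) := Σ_{s'} δ(s,a)(s') · f(s')`. -/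
noncomputable def fval (G : SG S A) (f : S → ℝ) (s : S) (a : A) : ℝ :=
  ∑ s', G.δ s a s' * f s'

/-- `f : S → [0,1]`. -/
def InUnit (f : S → ℝ) : Prop := ∀ s, 0 ≤ f s ∧ f s ≤ 1

/-- The right-hand side of the Bellman equations at a (non-target, non-sink)
state `s`, with available actions given by `Av'`:
`max_{a ∈ Av'(s)} f(s,a)` at Maximizer states and `min_{a ∈ Av'(s)} f(s,a)`
at Minimizer states. -/
noncomputable def bellmanOn (G : SG S A) (Av' : S → Finset A) (f : S → ℝ) (s : S) : ℝ :=
  if G.isMax s then sSup (G.fval f s '' ↑(Av' s)) else sInf (G.fval f s '' ↑(Av' s))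

/-- `f : S → [0,1]` is a solution of the Bellman equations of the game with
available actions restricted to `Av'`. -/
def IsSolutionOn (G : SG S A) (Av' : S → Finset A) (f : S → ℝ) : Prop :=
  InUnit f ∧ f G.target = 1 ∧ f G.sink = 0 ∧
    ∀ s, s ≠ G.target → s ≠ G.sink → f s = G.bellmanOn Av' f s

/-- `f` is a solution of the Bellman equations of `G`. -/
def IsSolution (G : SG S A) (f : S → ℝ) : Prop := G.IsSolutionOn G.Av f

/-- `V` is the least solution of the Bellman equations of the game with
available actions restricted to `Av'` (the value function of that game). -/
def IsLeastSolutionOn (G : SG S A) (Av' : S → Finset A) (V : S → ℝ) : Prop :=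
  G.IsSolutionOn Av' V ∧ ∀ f, G.IsSolutionOn Av' f → ∀ s, V s ≤ f s

/-- `V` is the value function of `G`: the least solution of the Bellman
equations, in the pointwise order. -/
def IsValue (G : SG S A) (V : S → ℝ) : Prop := G.IsLeastSolutionOn G.Av V

/-- `U` is the greatest solution of the Bellman equations of `G`, in the
pointwise order. -/
def IsGreatestSolution (G : SG S A) (U : S → ℝ) : Prop :=
  G.IsSolution U ∧ ∀ f, G.IsSolution f → ∀ s, f s ≤ U s

/-- `(s,a)` exits `T`: some successor with positive probability is outside `T`. -/
def Exits (G : SG S A) (T : Finset S) (s : S) (a : A) : Prop :=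
  ∃ s', s' ∉ T ∧ 0 < G.δ s a s'

/-- `exit^max_f(T)`: the maximum of `f(s,a)` over Maximizer states `s ∈ T`
and available actions `a` with `(s,a)` exiting `T` (max ∅ = 0). -/
noncomputable def exitMax (G : SG S A) (f : S → ℝ) (T : Finset S) : ℝ :=
  sSup (insert (0:ℝ)
    {x : ℝ | ∃ s ∈ T, G.isMax s = true ∧ ∃ a ∈ G.Av s, G.Exits T s a ∧ x = G.fval f s a})

/-- `exit^min_f(T)`: the minimum of `f(s,a)` over Minimizer states `s ∈ T`
and available actions `a` with `(s,a)` exiting `T` (min ∅ = 1). -/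
noncomputable def exitMin (G : SG S A) (f : S → ℝ) (T : Finset S) : ℝ :=
  sInf (insert (1:ℝ)
    {x : ℝ | ∃ s ∈ T, G.isMax s = false ∧ ∃ a ∈ G.Av s, G.Exits T s a ∧ x = G.fval f s a})

/-- `T` is an end component of the game with available actions restricted to
`Av'`: `T` is nonempty and there is a nonempty set `B` of actions, each
available at some state of `T`, such that (1) every `a ∈ B ∩ Av'(s)` for
`s ∈ T` stays in `T`, and (2) every state of `T` can reach every other state
of `T` by a finite path staying in `T` and using only actions of `B`. -/
def IsECOn (G : SG S A) (Av' : S → Finset A) (T : Finset S) : Prop :=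
  T.Nonempty ∧ ∃ B : Finset A, B.Nonempty ∧
    (∀ a ∈ B, ∃ s ∈ T, a ∈ Av' s) ∧
    (∀ s ∈ T, ∀ a ∈ B ∩ Av' s, ∀ s', 0 < G.δ s a s' → s' ∈ T) ∧
    (∀ s ∈ T, ∀ s' ∈ T, Relation.ReflTransGen
      (fun x y => x ∈ T ∧ ∃ a ∈ B ∩ Av' x, 0 < G.δ x a y) s s')

/-- `T` is an end component (EC) of `G`. -/
def IsEC (G : SG S A) (T : Finset S) : Prop := G.IsECOn G.Av T

/-- `T` is a maximal end component (MEC) of the game with available actions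
restricted to `Av'`. -/
def IsMECOn (G : SG S A) (Av' : S → Finset A) (T : Finset S) : Prop :=
  G.IsECOn Av' T ∧ ∀ T', G.IsECOn Av' T' → T ⊆ T' → T = T'

/-- `T` is a maximal end component (MEC) of `G`. -/
def IsMEC (G : SG S A) (T : Finset S) : Prop := G.IsMECOn G.Av T

/-- The available actions of the game obtained from `G` by removing, at every
Minimizer state `s`, each action `a ∈ Av(s)` with `f(s,a) > f(s)`. -/
noncomputable def restrictAv (G : SG S A) (f : S → ℝ) (s : S) : Finset A :=
  if G.isMax s then G.Av s
  else (G.Av s).filter (fun a => ¬ f s < G.fval f s a)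

/-- `T` is a simple end component (SEC) of `G`, with respect to the value
function `V`: an EC with `V(s) = exit^max_V(T)` for all `s ∈ T`. -/
def IsSEC (G : SG S A) (V : S → ℝ) (T : Finset S) : Prop :=
  G.IsEC T ∧ ∀ s ∈ T, V s = G.exitMax V T

/-- `T` is a maximal simple end component (MSEC) of `G` with respect to `V`. -/
def IsMSEC (G : SG S A) (V : S → ℝ) (T : Finset S) : Prop :=
  G.IsSEC V T ∧ ∀ T', G.IsSEC V T' → T ⊆ T' → T = T'

/-- `DEFLATE(T,f)`: equal to `min(f(s), exit^max_f(T))` on `T` and to `f`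
outside `T`. -/
noncomputable def deflate (G : SG S A) (T : Finset S) (f : S → ℝ) (s : S) : ℝ :=
  if s ∈ T then min (f s) (G.exitMax f T) else f s

/-- The Bellman update: `1` at the target, `0` at the sink, and the Bellman
right-hand side elsewhere. -/
noncomputable def bellmanUpdate (G : SG S A) (f : S → ℝ) : S → ℝ :=
  fun s => if s = G.target then 1 else if s = G.sink then 0 else G.bellmanOn G.Av f s

/-- The lower sequence `L_n` of bounded value iteration: `L_0` is `0`
everywhere except `L_0(target) = 1`, and `L_{n+1}` is the Bellman update
of `L_n`. -/
noncomputable def Lseq (G : SG S A) : ℕ → S → ℝ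
  | 0 => fun s => if s = G.target then 1 else 0
  | n + 1 => G.bellmanUpdate (G.Lseq n)

end SG

/-!
On the value `V`, the Minimizer's minimum at each state is attained by some action `a` with
`V(s,a) = V(s)`, and exactly these optimal actions survive the restriction; hence `V` still solves
the Bellman equations of the restricted game. Conversely, removing actions of the Minimizer can only
raise his minimum, so every solution of the restricted game is a super-solution (`B f ≤ f`) of the
original one. The least solution of a monotone Bellman operator lies below every super-solution:
the pointwise infimum of all super-solutions is again one, and a minimal super-solution is a
solution, since otherwise lowering it at one state to its Bellman value would give a smaller one.
-/

namespace SG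

variable {S A : Type} [Fintype S] [DecidableEq S] [Fintype A] [DecidableEq A]
variable (G : SG S A) (Av' : S → Finset A)

def IsSuperSolutionOn (f : S → ℝ) : Prop :=
  InUnit f ∧ f G.target = 1 ∧ f G.sink = 0 ∧
    ∀ s, s ≠ G.target → s ≠ G.sink → G.bellmanOn Av' f s ≤ f s

variable {G Av'}

theorem IsSolutionOn.isSuperSolutionOn {f : S → ℝ} (hf : G.IsSolutionOn Av' f) :
    G.IsSuperSolutionOn Av' f :=
  ⟨hf.1, hf.2.1, hf.2.2.1, fun s ht hz => (hf.2.2.2 s ht hz).ge⟩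

theorem fval_mono {f g : S → ℝ} (h : f ≤ g) (s : S) (a : A) : G.fval f s a ≤ G.fval g s a :=
  Finset.sum_le_sum fun s' _ => mul_le_mul_of_nonneg_left (h s') (G.δ_nonneg s a s')

theorem fval_nonneg {f : S → ℝ} (h : 0 ≤ f) (s : S) (a : A) : 0 ≤ G.fval f s a :=
  Finset.sum_nonneg fun s' _ => mul_nonneg (G.δ_nonneg s a s') (h s')

theorem bellmanOn_mono {f g : S → ℝ} (h : f ≤ g) (s : S) :
    G.bellmanOn Av' f s ≤ G.bellmanOn Av' g s := by
  rcases (Av' s).eq_empty_or_nonempty with hempty | ⟨a₀, ha₀⟩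
  · simp [bellmanOn, hempty]
  have hfin : ∀ k : S → ℝ, (G.fval k s '' ↑(Av' s)).Finite := fun _ =>
    (Av' s).finite_toSet.image _
  unfold bellmanOn
  split
  · refine csSup_le ⟨_, a₀, ha₀, rfl⟩ ?_
    rintro _ ⟨a, ha, rfl⟩
    exact (fval_mono h s a).trans (le_csSup (hfin g).bddAbove ⟨a, ha, rfl⟩)
  · refine le_csInf ⟨_, a₀, ha₀, rfl⟩ ?_
    rintro _ ⟨a, ha, rfl⟩
    exact (csInf_le (hfin f).bddBelow ⟨a, ha, rfl⟩).trans (fval_mono h s a)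

theorem bellmanOn_nonneg {f : S → ℝ} (h : 0 ≤ f) (s : S) : 0 ≤ G.bellmanOn Av' f s := by
  have hvals : ∀ x ∈ G.fval f s '' ↑(Av' s), 0 ≤ x := by
    rintro _ ⟨a, -, rfl⟩
    exact fval_nonneg h s a
  unfold bellmanOn
  split
  · exact Real.sSup_nonneg hvals
  · exact Real.sInf_nonneg hvals

theorem isSuperSolutionOn_iInf {ι : Type*} [Nonempty ι] {F : ι → S → ℝ}
    (hF : ∀ i, G.IsSuperSolutionOn Av' (F i)) :
    G.IsSuperSolutionOn Av' (fun s => ⨅ i, F i s) := by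
  have hbdd : ∀ s, BddBelow (Set.range fun i => F i s) := fun s =>
    ⟨0, by rintro _ ⟨i, rfl⟩; exact ((hF i).1 s).1⟩
  have hle : ∀ i, (fun s => ⨅ i, F i s) ≤ F i := fun i s => ciInf_le (hbdd s) i
  obtain ⟨i₀⟩ := ‹Nonempty ι›
  refine ⟨fun s => ⟨le_ciInf fun i => ((hF i).1 s).1, (hle i₀ s).trans ((hF i₀).1 s).2⟩,
    (iInf_congr fun i => (hF i).2.1).trans ciInf_const,
    (iInf_congr fun i => (hF i).2.2.1).trans ciInf_const, fun s ht hz => ?_⟩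
  exact le_ciInf fun i => (bellmanOn_mono (hle i) s).trans ((hF i).2.2.2 s ht hz)

theorem IsSuperSolutionOn.update_bellmanOn {f : S → ℝ} (hf : G.IsSuperSolutionOn Av' f) {s : S}
    (ht : s ≠ G.target) (hz : s ≠ G.sink) :
    G.IsSuperSolutionOn Av' (Function.update f s (G.bellmanOn Av' f s)) := by
  set g := Function.update f s (G.bellmanOn Av' f s)
  have hf₀ : 0 ≤ f := fun t => (hf.1 t).1
  have hgf : g ≤ f := by
    intro t
    rcases eq_or_ne t s with rfl | hts
    · simpa [g] using hf.2.2.2 t ht hz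
    · simp [g, Function.update_of_ne hts]
  refine ⟨fun t => ⟨?_, (hgf t).trans (hf.1 t).2⟩, ?_, ?_, fun t ht' hz' => ?_⟩
  · rcases eq_or_ne t s with rfl | hts
    · simpa [g] using bellmanOn_nonneg hf₀ t
    · simpa [g, Function.update_of_ne hts] using hf₀ t
  · simpa [g, Function.update_of_ne ht.symm] using hf.2.1
  · simpa [g, Function.update_of_ne hz.symm] using hf.2.2.1
  · refine (bellmanOn_mono hgf t).trans ?_
    rcases eq_or_ne t s with rfl | hts
    · simp [g]
    · simpa [g, Function.update_of_ne hts] using hf.2.2.2 t ht' hz'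

theorem IsSuperSolutionOn.isSolutionOn_of_forall_le {g : S → ℝ} (hg : G.IsSuperSolutionOn Av' g)
    (hmin : ∀ f, G.IsSuperSolutionOn Av' f → g ≤ f) : G.IsSolutionOn Av' g := by
  refine ⟨hg.1, hg.2.1, hg.2.2.1, fun s ht hz => le_antisymm ?_ (hg.2.2.2 s ht hz)⟩
  simpa using hmin _ (hg.update_bellmanOn ht hz) s

theorem IsLeastSolutionOn.le_of_isSuperSolutionOn {V f : S → ℝ} (hV : G.IsLeastSolutionOn Av' V)
    (hf : G.IsSuperSolutionOn Av' f) : V ≤ f := by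
  let P := {h : S → ℝ // G.IsSuperSolutionOn Av' h}
  have : Nonempty P := ⟨⟨V, hV.1.isSuperSolutionOn⟩⟩
  let g : S → ℝ := fun s => ⨅ h : P, h.1 s
  have hg_le : ∀ h : P, g ≤ h.1 := fun h s =>
    ciInf_le ⟨0, by rintro _ ⟨h', rfl⟩; exact (h'.2.1 s).1⟩ h
  have hg : G.IsSolutionOn Av' g :=
    (isSuperSolutionOn_iInf fun h : P => h.2).isSolutionOn_of_forall_le
      fun h hh => hg_le ⟨h, hh⟩
  exact le_trans (hV.2 g hg) (hg_le ⟨f, hf⟩)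

theorem IsLeastSolutionOn.unique {V V' : S → ℝ} (hV : G.IsLeastSolutionOn Av' V)
    (hV' : G.IsLeastSolutionOn Av' V') : V' = V :=
  funext fun s => le_antisymm (hV'.2 V hV.1 s) (hV.2 V' hV'.1 s)

variable {V : S → ℝ}

theorem IsSolution.restrictAv_nonempty (hV : G.IsSolution V) {s : S} (ht : s ≠ G.target)
    (hz : s ≠ G.sink) : (G.restrictAv V s).Nonempty := by
  unfold restrictAv
  split
  · exact G.Av_nonempty s
  · next hmin =>
    have hVs : V s = sInf (G.fval V s '' ↑(G.Av s)) := by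
      simpa [bellmanOn, hmin] using hV.2.2.2 s ht hz
    obtain ⟨a, ha, hopt⟩ := ((Finset.coe_nonempty.2 (G.Av_nonempty s)).image _).csInf_mem
      ((G.Av s).finite_toSet.image (G.fval V s))
    exact ⟨a, Finset.mem_filter.2 ⟨ha, by rw [hVs, hopt]; exact lt_irrefl _⟩⟩

theorem bellmanOn_le_bellmanOn_restrictAv (f : S → ℝ) {s : S}
    (hne : (G.restrictAv V s).Nonempty) :
    G.bellmanOn G.Av f s ≤ G.bellmanOn (G.restrictAv V) f s := by
  unfold bellmanOn restrictAv at *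
  split
  · simp_all
  · next hmin =>
    simp only [hmin, Bool.false_eq_true, ↓reduceIte] at hne ⊢
    exact csInf_le_csInf ((G.Av s).finite_toSet.image _).bddBelow
      ((Finset.coe_nonempty.2 hne).image _)
      (Set.image_mono (Finset.coe_subset.2 (Finset.filter_subset _ _)))

theorem IsSolution.isSolutionOn_restrictAv (hV : G.IsSolution V) :
    G.IsSolutionOn (G.restrictAv V) V := by
  refine ⟨hV.1, hV.2.1, hV.2.2.1, fun s ht hz => le_antisymm
    ((hV.2.2.2 s ht hz).trans_le
      (bellmanOn_le_bellmanOn_restrictAv V (hV.restrictAv_nonempty ht hz))) ?_⟩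
  obtain ⟨a, ha⟩ := hV.restrictAv_nonempty ht hz
  unfold bellmanOn
  split
  · next hmax =>
    have hVs := hV.2.2.2 s ht hz
    simp only [bellmanOn, hmax, ↓reduceIte] at hVs
    simpa [restrictAv, hmax] using hVs.ge
  · next hmin =>
    simp only [restrictAv, hmin, Bool.false_eq_true, ↓reduceIte, Finset.mem_filter,
      not_lt] at ha ⊢
    exact (csInf_le (((G.Av s).filter _).finite_toSet.image _).bddBelow
      ⟨a, by simpa using ha, rfl⟩).trans ha.2

theorem IsSolutionOn.isSuperSolutionOn_of_restrictAv (hV : G.IsSolution V) {f : S → ℝ}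
    (hf : G.IsSolutionOn (G.restrictAv V) f) : G.IsSuperSolutionOn G.Av f :=
  ⟨hf.1, hf.2.1, hf.2.2.1, fun s ht hz =>
    (bellmanOn_le_bellmanOn_restrictAv f (hV.restrictAv_nonempty ht hz)).trans
      (hf.2.2.2 s ht hz).ge⟩

end SG

/-- Let `V` be the value function of `G` and let `G'` be the
game obtained from `G` by removing, at every Minimizer state `s`, each action
`a ∈ Av(s)` with `V(s,a) > V(s)`. Then the value function of `G'` (the least
solution of the Bellman equations of the restricted game) equals `V`:
removing Minimizer's suboptimal actions does not change the value of any
state. -/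
theorem stmt13 {S A : Type} [Fintype S] [DecidableEq S] [Fintype A] [DecidableEq A]
    (G : SG S A) (V : S → ℝ) (hV : G.IsValue V) :
    G.IsLeastSolutionOn (G.restrictAv V) V ∧
      ∀ V' : S → ℝ, G.IsLeastSolutionOn (G.restrictAv V) V' → V' = V := by
  have hleast : G.IsLeastSolutionOn (G.restrictAv V) V :=
    ⟨SG.IsSolution.isSolutionOn_restrictAv hV.1, fun f hf =>
      SG.IsLeastSolutionOn.le_of_isSuperSolutionOn hV (hf.isSuperSolutionOn_of_restrictAv hV.1)⟩
  exact ⟨hleast, fun V' hV' => hleast.unique hV'⟩
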